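/- arXiv:2004.00414 — 4 statements merged into one kernel-verified Lean document; each statement's English description precedes it below -/
import Mathlib

section
/- For every integer N ≥ 1, the family of N+1 vectors v_n ∈ ℝ^{N+1} (n = 0,…,N), where v_n has j-th coordinate Q̂_n^N(j) for j = 0,…,N, is an orthonormal basis of the Euclidean space ℝ^{N+1}. -/
/-- Rising Pochhammer symbol `(a)_k = a (a+1) ⋯ (a+k-1)`. -/
noncomputable def rise (a : ℝ) (k : ℕ) : ℝ := ∏ i ∈ Finset.range k, (a + i)

/-- Falling Pochhammer symbol `(a)_{-k} = a (a-1) ⋯ (a-k+1)`. -/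
noncomputable def fall (a : ℝ) (k : ℕ) : ℝ := ∏ i ∈ Finset.range k, (a - i)

/-- Hahn (discrete Chebyshev) polynomial with unit weights:
`Q_n^N(x) = Σ_{k=0}^n (−1)^k (n)_{−k} (n+1)_k (x)_{−k} / ((k!)² (N)_{−k})`. -/
noncomputable def hahnQ (N n : ℕ) (x : ℝ) : ℝ :=
  ∑ k ∈ Finset.range (n + 1),
    (-1 : ℝ) ^ k * fall (n : ℝ) k * rise ((n : ℝ) + 1) k * fall x k
      / ((Nat.factorial k : ℝ) ^ 2 * fall (N : ℝ) k)

/-- Squared norm `h_n^N = Σ_{x=0}^{N} (Q_n^N(x))²` on the grid `{0,…,N}`. -/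
noncomputable def hahnH (N n : ℕ) : ℝ :=
  ∑ x ∈ Finset.range (N + 1), (hahnQ N n (x : ℝ)) ^ 2

/-- Normalized Hahn polynomial `Q̂_n^N(x) = Q_n^N(x)/√(h_n^N)`. -/
noncomputable def hahnQhat (N n : ℕ) (x : ℝ) : ℝ := hahnQ N n x / Real.sqrt (hahnH N n)

/-!
The Hahn polynomial `Q_n^N` is an eigenfunction, with eigenvalue `n (n + 1)`, of the second-order
difference operator `L y (x) = D (x + 1) (y (x + 1) - y x) - D x (y x - y (x - 1))` with
`D x = x (x - N - 1)`. Because `D` vanishes at `0` and at `N + 1`, summation by parts shows that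
`L` is symmetric for the counting measure on `{0, …, N}`, so eigenfunctions with distinct
eigenvalues are orthogonal there. Finally `Q_n^N (0) = 1`, so `h_n^N ≥ 1`, and `N + 1`
orthonormal vectors span `ℝ^{N+1}`.
-/

open Finset

theorem fall_succ (a : ℝ) (k : ℕ) : fall a (k + 1) = fall a k * (a - k) := by
  simp [fall, prod_range_succ]

theorem fall_add_one_succ (a : ℝ) (k : ℕ) : fall (a + 1) (k + 1) = (a + 1) * fall a k := by
  rw [fall, prod_range_succ', mul_comm, fall]
  congr 1
  · norm_num
  · exact prod_congr rfl fun i _ => by push_cast; ring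

theorem rise_succ (a : ℝ) (k : ℕ) : rise a (k + 1) = rise a k * (a + k) := by
  simp [rise, prod_range_succ]

theorem fall_natCast_pos {m k : ℕ} (h : k ≤ m) : 0 < fall (m : ℝ) k :=
  prod_pos fun i hi => by
    have : (i : ℝ) < m := by exact_mod_cast (mem_range.mp hi).trans_le h
    linarith

theorem fall_zero_succ (k : ℕ) : fall 0 (k + 1) = 0 :=
  prod_eq_zero (mem_range.mpr k.succ_pos) (by simp)

noncomputable def discreteSturmLiouville (D y : ℝ → ℝ) (x : ℝ) : ℝ :=
  D (x + 1) * (y (x + 1) - y x) - D x * (y x - y (x - 1))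

section DiscreteSturmLiouville

variable {D : ℝ → ℝ} {N : ℕ}

theorem discreteSturmLiouville_fall_zero (x : ℝ) :
    discreteSturmLiouville D (fun x => fall x 0) x = 0 := by
  simp [discreteSturmLiouville, fall]

theorem discreteSturmLiouville_sum {ι : Type*} (s : Finset ι) (c : ι → ℝ)
    (g : ι → ℝ → ℝ) (x : ℝ) :
    discreteSturmLiouville D (fun x => ∑ i ∈ s, c i * g i x) x
      = ∑ i ∈ s, c i * discreteSturmLiouville D (g i) x := by
  simp only [discreteSturmLiouville, ← sum_sub_distrib, mul_sum]
  exact sum_congr rfl fun i _ => by ring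

/-- Green's identity: the boundary terms of the summation by parts vanish since `D` does
at both ends of the grid. -/
theorem sum_mul_discreteSturmLiouville_comm (hD0 : D 0 = 0) (hDN : D (N + 1) = 0)
    (y z : ℝ → ℝ) :
    ∑ x ∈ range (N + 1), z x * discreteSturmLiouville D y x
      = ∑ x ∈ range (N + 1), y x * discreteSturmLiouville D z x := by
  let W : ℕ → ℝ := fun x => D x * (z (x - 1) * y x - y (x - 1) * z x)
  rw [← sub_eq_zero, ← sum_sub_distrib]
  have hW : ∀ x ∈ range (N + 1), z x * discreteSturmLiouville D y x
      - y x * discreteSturmLiouville D z x = W (x + 1) - W x := fun x _ => by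
    simp only [W, discreteSturmLiouville]
    push_cast
    rw [add_sub_cancel_right]
    ring
  rw [sum_congr rfl hW, sum_range_sub]
  simp [W, hD0, hDN]

theorem sum_mul_eq_zero_of_eigen (hD0 : D 0 = 0) (hDN : D (N + 1) = 0) {y z : ℝ → ℝ}
    {a b : ℝ} (hab : a ≠ b)
    (hy : ∀ x ∈ range (N + 1), discreteSturmLiouville D y x = a * y x)
    (hz : ∀ x ∈ range (N + 1), discreteSturmLiouville D z x = b * z x) :
    ∑ x ∈ range (N + 1), y x * z x = 0 := by
  have h : (a - b) * ∑ x ∈ range (N + 1), y x * z x = 0 := calc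
    _ = ∑ x ∈ range (N + 1), z x * discreteSturmLiouville D y x
          - ∑ x ∈ range (N + 1), y x * discreteSturmLiouville D z x := by
        rw [mul_sum, ← sum_sub_distrib]
        exact sum_congr rfl fun x hx => by rw [hy x hx, hz x hx]; ring
    _ = 0 := sub_eq_zero.mpr (sum_mul_discreteSturmLiouville_comm hD0 hDN y z)
  exact (mul_eq_zero.mp h).resolve_left (sub_ne_zero.mpr hab)

end DiscreteSturmLiouville

noncomputable def hahnCoeff (N n k : ℕ) : ℝ :=
  (-1 : ℝ) ^ k * fall (n : ℝ) k * rise ((n : ℝ) + 1) k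
    / ((Nat.factorial k : ℝ) ^ 2 * fall (N : ℝ) k)

theorem hahnQ_eq_sum (N n : ℕ) (x : ℝ) :
    hahnQ N n x = ∑ k ∈ range (n + 1), hahnCoeff N n k * fall x k :=
  sum_congr rfl fun k _ => by rw [hahnCoeff]; ring

theorem hahnCoeff_succ {N : ℕ} (n : ℕ) {k : ℕ} (hk : k < N) :
    hahnCoeff N n (k + 1) * (((k : ℝ) + 1) ^ 2 * (N - k))
      = (k * (k + 1) - n * (n + 1)) * hahnCoeff N n k := by
  have hfall := (fall_natCast_pos (m := N) hk.le).ne'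
  have hNk : (N : ℝ) - k ≠ 0 := sub_ne_zero.mpr (by exact_mod_cast hk.ne')
  simp only [hahnCoeff, fall_succ, rise_succ, Nat.factorial_succ, pow_succ]
  push_cast
  field_simp
  ring

theorem hahnQ_zero (N n : ℕ) : hahnQ N n 0 = 1 := by
  rw [hahnQ_eq_sum, sum_range_succ', sum_eq_zero fun k _ => by rw [fall_zero_succ, mul_zero]]
  simp [hahnCoeff, fall, rise]

theorem discreteSturmLiouville_fall_succ (N k : ℕ) (x : ℝ) :
    discreteSturmLiouville (fun x => x * (x - (N + 1))) (fun x => fall x (k + 1)) x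
      = (k + 1) * (k + 2) * fall x (k + 1) - (k + 1) ^ 2 * (N - k) * fall x k := by
  have hshift : fall x k * (x - k) = x * fall (x - 1) k := by
    rw [← fall_succ]
    simpa using fall_add_one_succ (x - 1) k
  simp only [discreteSturmLiouville, fall_add_one_succ]
  simp only [fall_succ]
  linear_combination (-(x - N - 1) * (x - 1 - k)) * hshift

theorem discreteSturmLiouville_hahnQ {N n : ℕ} (hn : n ≤ N) (x : ℝ) :
    discreteSturmLiouville (fun x => x * (x - (N + 1))) (hahnQ N n) x
      = n * (n + 1) * hahnQ N n x := by
  let g : ℕ → ℝ := fun k => k * (k + 1) * hahnCoeff N n k * fall x k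
  have hshift : ∑ k ∈ range n, g (k + 1) = ∑ k ∈ range n, g k + g n := by
    rw [← sum_range_succ, sum_range_succ']
    simp [g]
  rw [show hahnQ N n = _ from funext (hahnQ_eq_sum N n), discreteSturmLiouville_sum,
    sum_range_succ', discreteSturmLiouville_fall_zero, mul_zero, add_zero]
  simp only [discreteSturmLiouville_fall_succ]
  calc ∑ k ∈ range n, hahnCoeff N n (k + 1)
          * ((k + 1) * (k + 2) * fall x (k + 1) - (k + 1) ^ 2 * (N - k) * fall x k)
      = ∑ k ∈ range n, g (k + 1)
          - ∑ k ∈ range n, (k * (k + 1) - n * (n + 1)) * hahnCoeff N n k * fall x k := by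
        rw [← sum_sub_distrib]
        refine sum_congr rfl fun k hk => ?_
        have hkN : k < N := (mem_range.mp hk).trans_le hn
        simp only [g]
        push_cast
        linear_combination (-fall x k) * hahnCoeff_succ n hkN
    _ = n * (n + 1) * ∑ k ∈ range (n + 1), hahnCoeff N n k * fall x k := by
        rw [hshift, sum_range_succ, mul_add ((n : ℝ) * (n + 1)), mul_sum, add_sub_right_comm,
          ← sum_sub_distrib]
        congr 1
        · exact sum_congr rfl fun k _ => by ring
        · ring

theorem one_le_hahnH (N n : ℕ) : 1 ≤ hahnH N n := by
  have h := single_le_sum (f := fun x : ℕ => hahnQ N n x ^ 2) (fun x _ => sq_nonneg _)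
    (mem_range.mpr N.succ_pos)
  rw [hahnH]
  simpa [hahnQ_zero] using h

theorem sum_hahnQ_mul_hahnQ_of_ne {N m n : ℕ} (hm : m ≤ N) (hn : n ≤ N) (hmn : m ≠ n) :
    ∑ x ∈ range (N + 1), hahnQ N m x * hahnQ N n x = 0 := by
  refine sum_mul_eq_zero_of_eigen (by simp) (by ring) ?_
    (fun x _ => discreteSturmLiouville_hahnQ hm x) (fun x _ => discreteSturmLiouville_hahnQ hn x)
  intro h
  have : ((m : ℝ) - n) * (m + n + 1) = 0 := by linear_combination h
  have := (mul_eq_zero.mp this).resolve_right (by positivity)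
  exact hmn (by exact_mod_cast sub_eq_zero.mp this)

theorem sum_hahnQhat_mul_hahnQhat {N m n : ℕ} (hm : m ≤ N) (hn : n ≤ N) :
    ∑ x ∈ range (N + 1), hahnQhat N m x * hahnQhat N n x = if m = n then 1 else 0 := by
  simp only [hahnQhat, div_mul_div_comm, ← sum_div]
  split_ifs with hmn
  · subst hmn
    have hpos := zero_lt_one.trans_le (one_le_hahnH N m)
    rw [← Real.sqrt_mul hpos.le, Real.sqrt_mul_self hpos.le, div_eq_one_iff_eq hpos.ne']
    simp only [hahnH, sq]
  · rw [sum_hahnQ_mul_hahnQ_of_ne hm hn hmn, zero_div]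

theorem hahnQhat_orthonormal_basis_general (N : ℕ) :
    Orthonormal ℝ (fun n : Fin (N + 1) =>
      ((WithLp.equiv 2 (Fin (N + 1) → ℝ)).symm
        (fun j : Fin (N + 1) => hahnQhat N (n : ℕ) ((j : ℕ) : ℝ)) :
        EuclideanSpace ℝ (Fin (N + 1)))) ∧
    Submodule.span ℝ (Set.range (fun n : Fin (N + 1) =>
      ((WithLp.equiv 2 (Fin (N + 1) → ℝ)).symm
        (fun j : Fin (N + 1) => hahnQhat N (n : ℕ) ((j : ℕ) : ℝ)) :
        EuclideanSpace ℝ (Fin (N + 1))))) = ⊤ := by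
  refine (fun h => ⟨h, h.linearIndependent.span_eq_top_of_card_eq_finrank (by simp)⟩) ?_
  rw [orthonormal_iff_ite]
  intro m n
  calc _ = ∑ x ∈ range (N + 1), hahnQhat N m x * hahnQhat N n x := by
        rw [PiLp.inner_apply,
          ← Fin.sum_univ_eq_sum_range (fun x : ℕ => hahnQhat N m x * hahnQhat N n x)]
        simp [mul_comm]
    _ = _ := by simp [sum_hahnQhat_mul_hahnQhat m.is_le n.is_le, Fin.val_inj]

/-- The family of `N+1` vectors `v_n ∈ ℝ^{N+1}` with `(v_n)_j = Q̂_n^N(j)` is an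
orthonormal basis of the Euclidean space `ℝ^{N+1}`. -/
theorem hahnQhat_orthonormal_basis (N : ℕ) (hN : 1 ≤ N) :
    Orthonormal ℝ (fun n : Fin (N + 1) =>
      ((WithLp.equiv 2 (Fin (N + 1) → ℝ)).symm
        (fun j : Fin (N + 1) => hahnQhat N (n : ℕ) ((j : ℕ) : ℝ)) :
        EuclideanSpace ℝ (Fin (N + 1)))) ∧
    Submodule.span ℝ (Set.range (fun n : Fin (N + 1) =>
      ((WithLp.equiv 2 (Fin (N + 1) → ℝ)).symm
        (fun j : Fin (N + 1) => hahnQhat N (n : ℕ) ((j : ℕ) : ℝ)) :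
        EuclideanSpace ℝ (Fin (N + 1))))) = ⊤ :=
  hahnQhat_orthonormal_basis_general N
end

section
/- Let N, n, m be integers with n ≥ 1, m ≥ 0, m+1 < n(n+1) and 5(m+1) ≤ N+2. Then the cubic f has exactly one real root k_{(2)} in the open interval (0, m+1). -/
/-- The cubic `f(k) = 2k³ − (N+m+3)k² + ((m+1) − n(n+1))k + (m+1)n(n+1)`. -/
noncomputable def cubicF (N n m : ℤ) (k : ℝ) : ℝ :=
  2 * k ^ 3 - ((N : ℝ) + (m : ℝ) + 3) * k ^ 2
    + (((m : ℝ) + 1) - (n : ℝ) * ((n : ℝ) + 1)) * k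
    + ((m : ℝ) + 1) * (n : ℝ) * ((n : ℝ) + 1)

lemma cubicF_hasDerivAt (N n m : ℤ) (k : ℝ) :
    HasDerivAt (cubicF N n m)
      (6 * k ^ 2 - 2 * ((N : ℝ) + (m : ℝ) + 3) * k
        + (((m : ℝ) + 1) - (n : ℝ) * ((n : ℝ) + 1))) k := by
  have h : HasDerivAt (cubicF N n m)
      (2 * (↑3 * k ^ 2) - ((N : ℝ) + (m : ℝ) + 3) * (↑2 * k ^ 1)
        + (((m : ℝ) + 1) - (n : ℝ) * ((n : ℝ) + 1)) * 1 + 0) k := by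
    unfold cubicF
    exact ((((hasDerivAt_pow 3 k).const_mul 2).sub
      ((hasDerivAt_pow 2 k).const_mul _)).add
      ((hasDerivAt_id k).const_mul _)).add (hasDerivAt_const k _)
  convert h using 1
  ring

lemma cubicF_continuous (N n m : ℤ) : Continuous (cubicF N n m) := by
  unfold cubicF; continuity

/-- Under `n ≥ 1`, `m ≥ 0`, `m+1 < n(n+1)`, `5(m+1) ≤ N+2`, the cubic `f` has exactly one
real root in the open interval `(0, m+1)`. -/
theorem cubicF_unique_root (N n m : ℤ) (hn : 1 ≤ n) (hm : 0 ≤ m)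
    (hmn : m + 1 < n * (n + 1)) (hmN : 5 * (m + 1) ≤ N + 2) :
    ∃! k : ℝ, k ∈ Set.Ioo (0 : ℝ) ((m : ℝ) + 1) ∧ cubicF N n m k = 0 := by
  have hm' : (0 : ℝ) ≤ (m : ℝ) := by exact_mod_cast hm
  have hn' : (1 : ℝ) ≤ (n : ℝ) := by exact_mod_cast hn
  have hmn' : (m : ℝ) + 1 < (n : ℝ) * ((n : ℝ) + 1) := by exact_mod_cast hmn
  have hmN' : 5 * ((m : ℝ) + 1) ≤ (N : ℝ) + 2 := by exact_mod_cast hmN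
  -- strict antitonicity on [0, m+1]
  have hanti : StrictAntiOn (cubicF N n m) (Set.Icc (0 : ℝ) ((m : ℝ) + 1)) := by
    apply strictAntiOn_of_deriv_neg (convex_Icc _ _)
      ((cubicF_continuous N n m).continuousOn)
    intro x hx
    rw [interior_Icc] at hx
    rw [(cubicF_hasDerivAt N n m x).deriv]
    obtain ⟨hx0, hx1⟩ := hx
    nlinarith [mul_pos hx0 (by linarith : (0:ℝ) < 2 * ((m:ℝ) + 1) - x),
      mul_nonneg (by linarith : (0:ℝ) ≤ (N:ℝ) - (5 * (m:ℝ) + 3)) hx0.le]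
  have h0 : 0 < cubicF N n m 0 := by
    unfold cubicF
    nlinarith
  have h1 : cubicF N n m ((m : ℝ) + 1) < 0 := by
    unfold cubicF
    nlinarith [mul_pos (mul_pos (by linarith : (0:ℝ) < (m:ℝ)+1)
      (by linarith : (0:ℝ) < (m:ℝ)+1)) (by linarith : (0:ℝ) < (N:ℝ) - (m:ℝ))]
  -- existence via IVT
  have hsub := intermediate_value_Ioo' (by linarith : (0:ℝ) ≤ (m:ℝ) + 1)
    ((cubicF_continuous N n m).continuousOn)
  have h0mem : (0 : ℝ) ∈ Set.Ioo (cubicF N n m ((m : ℝ) + 1)) (cubicF N n m 0) :=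
    ⟨h1, h0⟩
  obtain ⟨k, hk, hfk⟩ := hsub h0mem
  refine ⟨k, ⟨hk, hfk⟩, ?_⟩
  rintro y ⟨hy, hfy⟩
  exact hanti.injOn (Set.mem_Icc_of_Ioo hy) (Set.mem_Icc_of_Ioo hk) (hfy.trans hfk.symm)
end

section
/- Let N, n, m be integers with n ≥ 1, m ≥ 0, m+1 < n(n+1) and 5(m+1) ≤ N+2, and let k_{(2)} be the unique root of the cubic f in the interval (0, m+1). Then the secant-method estimate from below holds: k_{(2)} ≥ (m+1)n(n+1) / (n(n+1) + (N−m)(m+1)), this bound being the root of the secant line of f through the points (0, f(0)) and (m+1, f(m+1)). -/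
/-- Secant-method estimate from below for the root `k₍₂₎` of `f` in `(0, m+1)`:
`k₍₂₎ ≥ (m+1)n(n+1) / (n(n+1) + (N−m)(m+1))`. -/
theorem cubicF_root_secant_lower_bound (N n m : ℤ) (hn : 1 ≤ n) (hm : 0 ≤ m)
    (hmn : m + 1 < n * (n + 1)) (hmN : 5 * (m + 1) ≤ N + 2)
    (k₂ : ℝ) (hk₂ : k₂ ∈ Set.Ioo (0 : ℝ) ((m : ℝ) + 1)) (hroot : cubicF N n m k₂ = 0) :
    k₂ ≥ ((m : ℝ) + 1) * (n : ℝ) * ((n : ℝ) + 1)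
      / ((n : ℝ) * ((n : ℝ) + 1) + ((N : ℝ) - (m : ℝ)) * ((m : ℝ) + 1)) := by
  obtain ⟨hk0, hk1⟩ := hk₂
  have hmr : (0 : ℝ) ≤ (m : ℝ) := by exact_mod_cast hm
  have hNr : 5 * ((m : ℝ) + 1) ≤ (N : ℝ) + 2 := by exact_mod_cast hmN
  have hmnr : (m : ℝ) + 1 < (n : ℝ) * ((n : ℝ) + 1) := by exact_mod_cast hmn
  have hD : (0 : ℝ) < (n : ℝ) * ((n : ℝ) + 1) + ((N : ℝ) - (m : ℝ)) * ((m : ℝ) + 1) := by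
    nlinarith
  rw [ge_iff_le, div_le_iff₀ hD]
  by_contra h
  push_neg at h
  have h1 : (0 : ℝ) < (m : ℝ) + 1 - k₂ := by linarith
  have h2 : (0 : ℝ) < (N : ℝ) - (m : ℝ) + 1 - 2 * k₂ := by nlinarith
  have hprod : 0 < k₂ * ((m : ℝ) + 1 - k₂) * ((N : ℝ) - (m : ℝ) + 1 - 2 * k₂) :=
    mul_pos (mul_pos hk0 h1) h2
  have hroot' : 2 * k₂ ^ 3 - ((N : ℝ) + (m : ℝ) + 3) * k₂ ^ 2
      + (((m : ℝ) + 1) - (n : ℝ) * ((n : ℝ) + 1)) * k₂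
      + ((m : ℝ) + 1) * (n : ℝ) * ((n : ℝ) + 1) = 0 := hroot
  nlinarith [hprod, h, hroot']
end

section
/- Let N, n, m be integers with n ≥ 1, m ≥ 0, m+1 < n(n+1) and 5(m+1) ≤ N+2, and let k_{(2)} be the unique root of the cubic f in the interval (0, m+1). Then Newton's method started at k_0 = m+1 gives an estimate from above: k_{(2)} ≤ (m+1) − f(m+1)/f′(m+1), where f′(k) = 6k² − 2(N+m+3)k + (m+1) − n(n+1). -/
/-- Newton's-method estimate from above for the root `k₍₂₎` of `f` in `(0, m+1)`:
`k₍₂₎ ≤ (m+1) − f(m+1)/f′(m+1)` where `f′(k) = 6k² − 2(N+m+3)k + (m+1) − n(n+1)`. -/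
theorem cubicF_root_newton_upper_bound (N n m : ℤ) (hn : 1 ≤ n) (hm : 0 ≤ m)
    (hmn : m + 1 < n * (n + 1)) (hmN : 5 * (m + 1) ≤ N + 2)
    (k₂ : ℝ) (hk₂ : k₂ ∈ Set.Ioo (0 : ℝ) ((m : ℝ) + 1)) (hroot : cubicF N n m k₂ = 0) :
    k₂ ≤ ((m : ℝ) + 1) - cubicF N n m ((m : ℝ) + 1)
      / (6 * ((m : ℝ) + 1) ^ 2 - 2 * ((N : ℝ) + (m : ℝ) + 3) * ((m : ℝ) + 1)
          + ((m : ℝ) + 1) - (n : ℝ) * ((n : ℝ) + 1)) := by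
  obtain ⟨hk0, hkM⟩ := hk₂
  have hnR : (1 : ℝ) ≤ (n : ℝ) := by exact_mod_cast hn
  have hmR : (0 : ℝ) ≤ (m : ℝ) := by exact_mod_cast hm
  have hmnR : (m : ℝ) + 1 < (n : ℝ) * ((n : ℝ) + 1) := by exact_mod_cast hmn
  have hmNR : 5 * ((m : ℝ) + 1) ≤ (N : ℝ) + 2 := by exact_mod_cast hmN
  set M : ℝ := (m : ℝ) + 1 with hM
  set D : ℝ := 6 * M ^ 2 - 2 * ((N : ℝ) + (m : ℝ) + 3) * M + M - (n : ℝ) * ((n : ℝ) + 1)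
    with hD
  have hMpos : 0 < M := by positivity
  have hDneg : D < 0 := by
    have h1 : (N : ℝ) ≥ 5 * M - 2 := by linarith
    nlinarith [sq_nonneg M, hMpos]
  have hroot' : cubicF N n m k₂ = 0 := hroot
  unfold cubicF at hroot' ⊢
  -- tangent-line inequality: f(M) + D*(k₂ - M) ≥ 0
  have hkey : (2 * M ^ 3 - ((N : ℝ) + (m : ℝ) + 3) * M ^ 2
      + (M - (n : ℝ) * ((n : ℝ) + 1)) * M + M * (n : ℝ) * ((n : ℝ) + 1))
      + D * (k₂ - M) ≥ 0 := by
    have hsq : (k₂ - M) ^ 2 ≥ 0 := sq_nonneg _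
    have hA : (N : ℝ) + (m : ℝ) + 3 ≥ 6 * M := by linarith
    have hc : 2 * k₂ + 4 * M - ((N : ℝ) + (m : ℝ) + 3) ≤ 0 := by linarith
    nlinarith [mul_nonpos_of_nonneg_of_nonpos hsq hc]
  have hdiv : (2 * M ^ 3 - ((N : ℝ) + (m : ℝ) + 3) * M ^ 2
      + (M - (n : ℝ) * ((n : ℝ) + 1)) * M + M * (n : ℝ) * ((n : ℝ) + 1)) / D ≤ M - k₂ := by
    rw [div_le_iff_of_neg hDneg]
    nlinarith [hkey]
  linarith [hdiv]
end
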